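/- Let G=(V0,V1,E) be a connectivity game, (G_k)_{k≥0} its derivative sequence, and (G'_k)_{k≥0} its simplified derivative sequence obtained from any fixed choice function selecting one outgoing edge per forced vertex. Then for every k≥0, the strongly connected components of G_k and of G'_k coincide: SCC(G_k)=SCC(G'_k). -/

import Mathlib

namespace Games

universe u

variable {V : Type u}

/-- A connectivity game: player 0's positions `V0`, player 1's positions `V1`,
and the edge set `E`. -/
structure ConnGame (V : Type u) where
  V0 : Set V
  V1 : Set V
  E : Set (V × V)

namespace ConnGame

/-- The vertex set `V = V0 ∪ V1`. -/
def verts (G : ConnGame V) : Set V := G.V0 ∪ G.V1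

/-- The sub-game of `G` played on the vertex set `X` (edges restricted to `X`). -/
def restrict (G : ConnGame V) (X : Set V) : ConnGame V :=
  ⟨G.V0 ∩ X, G.V1 ∩ X, {e | e ∈ G.E ∧ e.1 ∈ X ∧ e.2 ∈ X}⟩

end ConnGame

/-- Reachability by a directed path in the digraph with edge set `E`. -/
def Reach (E : Set (V × V)) : V → V → Prop :=
  Relation.ReflTransGen fun x y => (x, y) ∈ E

/-- Reachability by a directed path staying inside `X`. -/
def ReachWithin (E : Set (V × V)) (X : Set V) : V → V → Prop :=
  Relation.ReflTransGen fun x y => (x, y) ∈ E ∧ x ∈ X ∧ y ∈ X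

/-- The set of strongly connected components of the digraph with vertex set `W`
and edge set `E`. -/
def SCCs (W : Set V) (E : Set (V × V)) : Set (Set V) :=
  {S | ∃ v ∈ W, S = {u | u ∈ W ∧ Reach E v u ∧ Reach E u v}}

/-- The digraph with vertex set `W` and edge set `E` is strongly connected. -/
def StronglyConnected (W : Set V) (E : Set (V × V)) : Prop :=
  ∀ a ∈ W, ∀ b ∈ W, Reach E a b

/-- `E⁻¹(S)`: the set of predecessors of `S`. -/
def preds (E : Set (V × V)) (S : Set V) : Set V := {u | ∃ s ∈ S, (u, s) ∈ E}

/-- `Force(U, S) = {v ∈ (E⁻¹(S) \ S) ∩ U : E(v) ⊆ S}`. -/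
def Force (E : Set (V × V)) (U S : Set V) : Set V :=
  {v | v ∈ (preds E S \ S) ∩ U ∧ ∀ u, (v, u) ∈ E → u ∈ S}

/-- `X` is a forced trap (FT) w.r.t. player 1's positions `V1` and edge set `E`:
either `X` is a singleton, or `|X| > 1`, `E(X ∩ V1) ⊆ X` and any two vertices of `X`
are strongly connected within `X`. -/
def IsFT (V1 : Set V) (E : Set (V × V)) (X : Set V) : Prop :=
  (∃ v, X = {v}) ∨
    (X.Nontrivial ∧ (∀ v ∈ X ∩ V1, ∀ u, (v, u) ∈ E → u ∈ X) ∧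
      ∀ a ∈ X, ∀ b ∈ X, ReachWithin E X a b)

/-- The derivative sequence of `G`: `deriv G k = (E_k, U_k, F_k)`. -/
def deriv (G : ConnGame V) : ℕ → Set (V × V) × Set V × Set V
  | 0 => ({e | e ∈ G.E ∧ e.1 ∈ G.V0}, G.V1, ∅)
  | k + 1 =>
    let p := deriv G k
    let F : Set V := ⋃ S ∈ SCCs G.verts p.1, Force G.E p.2.1 S
    (p.1 ∪ {e | e ∈ G.E ∧ e.1 ∈ F}, p.2.1 \ F, F)

/-- The edge set `E_k` of the `k`-th derivative `G_k`. -/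
def Ek (G : ConnGame V) (k : ℕ) : Set (V × V) := (deriv G k).1

/-- The set `U_k`. -/
def Uk (G : ConnGame V) (k : ℕ) : Set V := (deriv G k).2.1

/-- The set `F_k`. -/
def Fk (G : ConnGame V) (k : ℕ) : Set V := (deriv G k).2.2

/-- The stabilization point: the minimal `k > 0` with `F_k = ∅`. -/
noncomputable def stab (G : ConnGame V) : ℕ := sInf {k | 0 < k ∧ Fk G k = ∅}

/-- Finite plays (histories) consistent with the player-0 strategy `s`, starting
at `v0`: at a player-0 position the strategy's (legal) move is played, at a
player-1 position any legal move may be played. -/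
inductive Hist (G : ConnGame V) (s : List V → V) (v0 : V) : List V → Prop
  | base : Hist G s v0 [v0]
  | move0 (h : List V) (v : V) (hh : Hist G s v0 (h ++ [v])) (hv : v ∈ G.V0)
      (he : (v, s (h ++ [v])) ∈ G.E) : Hist G s v0 ((h ++ [v]) ++ [s (h ++ [v])])
  | move1 (h : List V) (v u : V) (hh : Hist G s v0 (h ++ [v])) (hv : v ∈ G.V1)
      (he : (v, u) ∈ G.E) : Hist G s v0 ((h ++ [v]) ++ [u])

/-- The prefix `ρ 0, …, ρ n` of an infinite sequence. -/
def prefixUpTo (ρ : ℕ → V) (n : ℕ) : List V := List.ofFn fun i : Fin (n + 1) => ρ i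

/-- `ρ` is an infinite play consistent with strategy `s` from `v0`. -/
def InfPlay (G : ConnGame V) (s : List V → V) (v0 : V) (ρ : ℕ → V) : Prop :=
  ∀ n, Hist G s v0 (prefixUpTo ρ n)

/-- The set of vertices visited infinitely often by `ρ`. -/
def InfSet (ρ : ℕ → V) : Set V := {v | ∀ N, ∃ n, N ≤ n ∧ ρ n = v}

/-- `s` is a winning strategy for player 0 from `v0` in the connectivity game on `G`:
along every consistent history player 0's moves are legal and the play is never stuck
(so all maximal consistent plays are infinite), and every infinite consistent play
visits every vertex of `G` infinitely often. -/
def WinsConnFrom (G : ConnGame V) (s : List V → V) (v0 : V) : Prop :=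
  (∀ h v, Hist G s v0 (h ++ [v]) →
      (v ∈ G.V0 → (v, s (h ++ [v])) ∈ G.E) ∧ (v ∈ G.V1 → ∃ u, (v, u) ∈ G.E)) ∧
    ∀ ρ : ℕ → V, InfPlay G s v0 ρ → InfSet ρ = G.verts

/-- `G` is forced-connected: player 0 wins the connectivity game from every vertex. -/
def ForcedConnected (G : ConnGame V) : Prop :=
  ∀ v ∈ G.verts, ∃ s : List V → V, WinsConnFrom G s v

/-- The simplified derivative sequence `G'_k`, where the choice function `c`
selects one outgoing edge per forced vertex: `deriv' G c k = (E'_k, U_k, F_k)`. -/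
def deriv' (G : ConnGame V) (c : V → V) : ℕ → Set (V × V) × Set V × Set V
  | 0 => ({e | e ∈ G.E ∧ e.1 ∈ G.V0}, G.V1, ∅)
  | k + 1 =>
    let p := deriv' G c k
    let F : Set V := ⋃ S ∈ SCCs G.verts p.1, Force G.E p.2.1 S
    (p.1 ∪ {e | ∃ f ∈ F, e = (f, c f)}, p.2.1 \ F, F)

/-- The edge set `E'_k` of the simplified derivative `G'_k`. -/
def Ek' (G : ConnGame V) (c : V → V) (k : ℕ) : Set (V × V) := (deriv' G c k).1

/-- The set `F_k` of the simplified derivative sequence. -/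
def Fk' (G : ConnGame V) (c : V → V) (k : ℕ) : Set V := (deriv' G c k).2.2

/-- The stabilization point of the simplified derivative sequence. -/
noncomputable def stab' (G : ConnGame V) (c : V → V) : ℕ :=
  sInf {k | 0 < k ∧ Fk' G c k = ∅}

/-- The reduced derivative sequence `G''_k` on the vertex set `V0`:
`deriv'' G c k = (E''_k, U''_k, F''_k)`. -/
def deriv'' (G : ConnGame V) (c : V → V) : ℕ → Set (V × V) × Set V × Set V
  | 0 => (∅, G.V1, ∅)
  | k + 1 =>
    let p := deriv'' G c k
    let F : Set V := ⋃ S ∈ SCCs G.V0 p.1, Force G.E p.2.1 S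
    (p.1 ∪ {e | ∃ f ∈ F, (e.1, f) ∈ G.E ∧ e.2 = c f}, p.2.1 \ F, F)

/-- The edge set `E''_k` of the reduced derivative `G''_k`. -/
def Ek'' (G : ConnGame V) (c : V → V) (k : ℕ) : Set (V × V) := (deriv'' G c k).1

/-- The set `F''_k` of the reduced derivative sequence. -/
def Fk'' (G : ConnGame V) (c : V → V) (k : ℕ) : Set V := (deriv'' G c k).2.2

/-- The stabilization point of the reduced derivative sequence. -/
noncomputable def stab'' (G : ConnGame V) (c : V → V) : ℕ :=
  sInf {k | 0 < k ∧ Fk'' G c k = ∅}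

/-- The derivation forest: `forest G k = (N_k, Son_k)`. -/
def forest (G : ConnGame V) : ℕ → Set (Set V) × Set (Set V × Set V)
  | 0 => ({S | ∃ v ∈ G.verts, S = {v}}, ∅)
  | k + 1 =>
    let p := forest G k
    let C : Set (Set V) := SCCs G.verts (Ek G (k + 1)) \ p.1
    (p.1 ∪ C, p.2 ∪ {q | q.1 ∈ C ∧ q.2 ∈ SCCs G.verts (Ek G k) ∧ q.2 ⊂ q.1})

/-- The node set `N` of the derivation forest `Γ(G) = Γ_s(G)`. -/
noncomputable def forestN (G : ConnGame V) : Set (Set V) := (forest G (stab G)).1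

/-- The son relation `Son` of the derivation forest `Γ(G) = Γ_s(G)`. -/
noncomputable def forestSon (G : ConnGame V) : Set (Set V × Set V) :=
  (forest G (stab G)).2


/-!
All moves of a vertex `x` forced at step `k` lead into one strongly connected component `S` of
`G_{k-1}`, so any new edge `(x, y)` of `G_k` can be replaced by the chosen edge `(x, c x)` followed
by a path inside `S`. Inductively, `E'_k ⊆ E_k` and every edge of `E_k` is simulated by a path of
`E'_k`; hence `G_k` and `G'_k` have the same reachability relation, the same strongly connected
components, and so force the same vertices at the next step.
-/

theorem reach_mono {E E' : Set (V × V)} (h : E ⊆ E') {a b : V} (hab : Reach E a b) :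
    Reach E' a b :=
  Relation.ReflTransGen.mono (fun _ _ hxy => h hxy) a b hab

theorem reach_of_forall_mem_reach {E E' : Set (V × V)} (h : ∀ x y, (x, y) ∈ E → Reach E' x y)
    {a b : V} (hab : Reach E a b) : Reach E' a b :=
  Relation.ReflTransGen.lift' id h a b hab

theorem reach_of_mem_SCCs {W S : Set V} {E : Set (V × V)} (hS : S ∈ SCCs W E) {a b : V}
    (ha : a ∈ S) (hb : b ∈ S) : Reach E a b := by
  obtain ⟨v, -, rfl⟩ := hS
  exact ha.2.2.trans hb.2.1

theorem SCCs_congr {W : Set V} {E E' : Set (V × V)} (h : ∀ a b, Reach E a b ↔ Reach E' a b) :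
    SCCs W E = SCCs W E' := by
  simp only [SCCs, h]

namespace ConnGame

def forcedVerts (G : ConnGame V) (E : Set (V × V)) (U : Set V) : Set V :=
  ⋃ S ∈ SCCs G.verts E, Force G.E U S

theorem exists_edge_of_mem_forcedVerts {G : ConnGame V} {E : Set (V × V)} {U : Set V} {x : V}
    (hx : x ∈ G.forcedVerts E U) : ∃ u, (x, u) ∈ G.E := by
  simp only [forcedVerts, Set.mem_iUnion] at hx
  obtain ⟨S, -, ⟨⟨⟨s, -, hxs⟩, -⟩, -⟩, -⟩ := hx
  exact ⟨s, hxs⟩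

theorem reach_of_mem_forcedVerts {G : ConnGame V} {E : Set (V × V)} {U : Set V} {x y z : V}
    (hx : x ∈ G.forcedVerts E U) (hy : (x, y) ∈ G.E) (hz : (x, z) ∈ G.E) : Reach E y z := by
  simp only [forcedVerts, Set.mem_iUnion] at hx
  obtain ⟨S, hS, -, hsucc⟩ := hx
  exact reach_of_mem_SCCs hS (hsucc y hy) (hsucc z hz)

end ConnGame

open ConnGame

def Uk' (G : ConnGame V) (c : V → V) (k : ℕ) : Set V := (deriv' G c k).2.1

section Succ

variable (G : ConnGame V) (c : V → V) (k : ℕ)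

theorem Ek_succ :
    Ek G (k + 1) = Ek G k ∪ {e | e ∈ G.E ∧ e.1 ∈ G.forcedVerts (Ek G k) (Uk G k)} :=
  rfl

theorem Uk_succ : Uk G (k + 1) = Uk G k \ G.forcedVerts (Ek G k) (Uk G k) :=
  rfl

theorem Ek'_succ :
    Ek' G c (k + 1) =
      Ek' G c k ∪ {e | ∃ f ∈ G.forcedVerts (Ek' G c k) (Uk' G c k), e = (f, c f)} :=
  rfl

theorem Uk'_succ : Uk' G c (k + 1) = Uk' G c k \ G.forcedVerts (Ek' G c k) (Uk' G c k) :=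
  rfl

end Succ

def SimulatesDeriv (G : ConnGame V) (c : V → V) (k : ℕ) : Prop :=
  Uk' G c k = Uk G k ∧ Ek' G c k ⊆ Ek G k ∧ ∀ x y, (x, y) ∈ Ek G k → Reach (Ek' G c k) x y

theorem SimulatesDeriv.reach_iff {G : ConnGame V} {c : V → V} {k : ℕ} (h : SimulatesDeriv G c k)
    (a b : V) : Reach (Ek G k) a b ↔ Reach (Ek' G c k) a b :=
  ⟨reach_of_forall_mem_reach h.2.2, reach_mono h.2.1⟩

theorem SimulatesDeriv.forcedVerts_eq {G : ConnGame V} {c : V → V} {k : ℕ}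
    (h : SimulatesDeriv G c k) :
    G.forcedVerts (Ek' G c k) (Uk' G c k) = G.forcedVerts (Ek G k) (Uk G k) := by
  simp only [forcedVerts, h.1, SCCs_congr h.reach_iff]

theorem SimulatesDeriv.succ {G : ConnGame V} {c : V → V}
    (hc : ∀ v : V, (∃ u, (v, u) ∈ G.E) → (v, c v) ∈ G.E) {k : ℕ} (h : SimulatesDeriv G c k) :
    SimulatesDeriv G c (k + 1) := by
  have hF := h.forcedVerts_eq
  have hmono : Ek' G c k ⊆ Ek' G c (k + 1) := Set.subset_union_left
  refine ⟨by rw [Uk_succ, Uk'_succ, hF, h.1], ?_, ?_⟩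
  · rw [Ek_succ, Ek'_succ, hF]
    rintro e (he | ⟨f, hf, rfl⟩)
    · exact Or.inl (h.2.1 he)
    · exact Or.inr ⟨hc f (exists_edge_of_mem_forcedVerts hf), hf⟩
  · rintro x y (hxy | ⟨hxy, hxF⟩)
    · exact reach_mono hmono (h.2.2 x y hxy)
    · have hcx : (x, c x) ∈ Ek' G c (k + 1) := by
        rw [Ek'_succ, hF]
        exact Or.inr ⟨x, hxF, rfl⟩
      have hcxy : Reach (Ek G k) (c x) y :=
        reach_of_mem_forcedVerts hxF (hc x (exists_edge_of_mem_forcedVerts hxF)) hxy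
      exact Relation.ReflTransGen.head hcx (reach_mono hmono ((h.reach_iff _ _).1 hcxy))

theorem simulatesDeriv {G : ConnGame V} {c : V → V}
    (hc : ∀ v : V, (∃ u, (v, u) ∈ G.E) → (v, c v) ∈ G.E) (k : ℕ) : SimulatesDeriv G c k := by
  induction k with
  | zero => exact ⟨rfl, subset_rfl, fun x y hxy => Relation.ReflTransGen.single hxy⟩
  | succ k ih => exact ih.succ hc

theorem stmt6_general (G : ConnGame V)
    (c : V → V) (hc : ∀ v : V, (∃ u, (v, u) ∈ G.E) → (v, c v) ∈ G.E) :
    ∀ k : ℕ, SCCs G.verts (Ek G k) = SCCs G.verts (Ek' G c k) :=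
  fun k => SCCs_congr (simulatesDeriv hc k).reach_iff

/-- For any fixed choice function `c` selecting one outgoing edge per
forced vertex, the strongly connected components of the derivative `G_k` and of the
simplified derivative `G'_k` coincide, for every `k ≥ 0`. -/
theorem stmt6 [Fintype V] (G : ConnGame V)
    (hdisj : Disjoint G.V0 G.V1)
    (hEsub : G.E ⊆ (G.V0 ×ˢ G.V1) ∪ (G.V1 ×ˢ G.V0))
    (c : V → V) (hc : ∀ v : V, (∃ u, (v, u) ∈ G.E) → (v, c v) ∈ G.E) :
    ∀ k : ℕ, SCCs G.verts (Ek G k) = SCCs G.verts (Ek' G c k) :=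
  stmt6_general G c hc

end Games
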